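/- arXiv:1810.10210 — 2 statements merged into one kernel-verified Lean document; each statement's English description precedes it below -/
import Mathlib

section
/- Let V₁ ≤ V₂ be two C¹ functions on ℝ², each positively homogeneous of degree 2 and positive away from the origin, and let γ : [0,T] × ℝ² → [0,1]. If z is a never-zero solution of Jz' = (1 − γ(t,z))∇V₁(z) + γ(t,z)∇V₂(z), written in polar coordinates z(t) = ρ(t)e^{iϑ(t)}, then for almost every t, 0 < 2V₁(cos ϑ(t), sin ϑ(t)) ≤ −ϑ'(t) ≤ 2V₂(cos ϑ(t), sin ϑ(t)). -/
/-!
Write `u = (cos ϑ, sin ϑ)`. Since `z = ρ u` near every interior time `t`, the cross product of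
`u` and `z` vanishes identically there; differentiating it gives `⟨J z', z⟩ = -ρ² ϑ'`. On the other
hand, pairing the equation with `z` and using Euler's identity `⟨∇Vᵢ(z), z⟩ = 2 Vᵢ(z) = 2 ρ² Vᵢ(u)`
gives `⟨J z', z⟩ = ρ² ((1 - γ) 2V₁(u) + γ 2V₂(u))`. Hence `-ϑ'` is a convex combination of
`2V₁(u) ≤ 2V₂(u)`, and `V₁(u) > 0`.
-/

open MeasureTheory Filter Topology Set Real

/-- The standard symplectic matrix `J = [[0,-1],[1,0]]` acting on `ℝ²`. -/
def J2 (w : ℝ × ℝ) : ℝ × ℝ := (-w.2, w.1)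

/-- The gradient of a function `V : ℝ² → ℝ`. -/
noncomputable def grad2 (V : ℝ × ℝ → ℝ) (z : ℝ × ℝ) : ℝ × ℝ :=
  (fderiv ℝ V z (1, 0), fderiv ℝ V z (0, 1))

theorem grad2_dot (V : ℝ × ℝ → ℝ) (u x : ℝ × ℝ) :
    (grad2 V u).1 * x.1 + (grad2 V u).2 * x.2 = fderiv ℝ V u x := by
  have hx : x = x.1 • ((1 : ℝ), (0 : ℝ)) + x.2 • ((0 : ℝ), (1 : ℝ)) := by simp
  conv_rhs => rw [hx, map_add, map_smul, map_smul]
  simp only [grad2, smul_eq_mul]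
  ring

theorem fderiv_apply_self_of_homogeneous {E : Type*} [NormedAddCommGroup E] [NormedSpace ℝ E]
    {V : E → ℝ} {w : E} {n : ℕ} (hV : DifferentiableAt ℝ V w)
    (hhom : ∀ l : ℝ, 0 < l → V (l • w) = l ^ n * V w) :
    fderiv ℝ V w w = n * V w := by
  have hray : HasDerivAt (fun l : ℝ => V (l • w)) (fderiv ℝ V w w) 1 := by
    have hV' : HasFDerivAt V (fderiv ℝ V w) ((1 : ℝ) • w) := by simpa using hV.hasFDerivAt
    simpa [Function.comp_def] using
      hV'.comp_hasDerivAt (1 : ℝ) ((hasDerivAt_id (1 : ℝ)).smul_const w)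
  have hpow : HasDerivAt (fun l : ℝ => l ^ n * V w) (n * V w) 1 := by
    simpa using (hasDerivAt_pow n (1 : ℝ)).mul_const (V w)
  have hray_eq : (fun l : ℝ => V (l • w)) =ᶠ[𝓝 1] fun l => l ^ n * V w := by
    filter_upwards [eventually_gt_nhds one_pos] with l hl using hhom l hl
  exact hray.unique (hpow.congr_of_eventuallyEq hray_eq)

theorem grad2_dot_self_of_homogeneous {V : ℝ × ℝ → ℝ} {w : ℝ × ℝ} {n : ℕ}
    (hV : DifferentiableAt ℝ V w) (hhom : ∀ l : ℝ, 0 < l → V (l • w) = l ^ n * V w) :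
    (grad2 V w).1 * w.1 + (grad2 V w).2 * w.2 = n * V w := by
  rw [grad2_dot, fderiv_apply_self_of_homogeneous hV hhom]

theorem J2_dot_eq_of_polar {z : ℝ → ℝ × ℝ} {ρ ϑ : ℝ → ℝ} {t θ' : ℝ} {v : ℝ × ℝ}
    (hpolar : z =ᶠ[𝓝 t] fun s => ρ s • (cos (ϑ s), sin (ϑ s)))
    (hz : HasDerivAt z v t) (hϑ : HasDerivAt ϑ θ' t) :
    (J2 v).1 * (z t).1 + (J2 v).2 * (z t).2 = -(ρ t ^ 2 * θ') := by
  set cross : ℝ → ℝ := fun s => cos (ϑ s) * (z s).2 - sin (ϑ s) * (z s).1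
  have hcross_zero : HasDerivAt cross 0 t := by
    refine (hasDerivAt_const t (0 : ℝ)).congr_of_eventuallyEq ?_
    filter_upwards [hpolar] with s hs
    simp only [cross, hs, Prod.smul_fst, Prod.smul_snd, smul_eq_mul]
    ring
  have hcross : HasDerivAt cross
      (-sin (ϑ t) * θ' * (z t).2 + cos (ϑ t) * v.2
        - (cos (ϑ t) * θ' * (z t).1 + sin (ϑ t) * v.1)) t :=
    (((hasDerivAt_cos (ϑ t)).comp t hϑ).mul hz.snd).sub
      (((hasDerivAt_sin (ϑ t)).comp t hϑ).mul hz.fst)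
  have hderiv := hcross.unique hcross_zero
  have hzt : z t = (ρ t * cos (ϑ t), ρ t * sin (ϑ t)) := by
    simpa using hpolar.self_of_nhds
  rw [hzt] at hderiv ⊢
  simp only [J2]
  linear_combination (-ρ t) * hderiv - ρ t ^ 2 * θ' * sin_sq_add_cos_sq (ϑ t)

theorem angular_velocity_between_general (T : ℝ)
    (V₁ V₂ : ℝ × ℝ → ℝ)
    (hV₁ : ContDiff ℝ 1 V₁) (hV₂ : ContDiff ℝ 1 V₂)
    (hhom₁ : ∀ l : ℝ, 0 < l → ∀ w : ℝ × ℝ, w ≠ 0 → V₁ (l • w) = l ^ 2 * V₁ w)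
    (hhom₂ : ∀ l : ℝ, 0 < l → ∀ w : ℝ × ℝ, w ≠ 0 → V₂ (l • w) = l ^ 2 * V₂ w)
    (hpos₁ : ∀ w : ℝ × ℝ, w ≠ 0 → 0 < V₁ w)
    (hle : ∀ w : ℝ × ℝ, V₁ w ≤ V₂ w)
    (γ : ℝ → ℝ × ℝ → ℝ)
    (hγ : ∀ t z, γ t z ∈ Set.Icc (0:ℝ) 1)
    (z z' : ℝ → ℝ × ℝ) (ρ ϑ ϑ' : ℝ → ℝ)
    (hnz : ∀ t ∈ Set.Icc 0 T, z t ≠ 0)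
    (hρ : ∀ t ∈ Set.Icc 0 T, 0 < ρ t)
    (hpolar : ∀ t ∈ Set.Icc 0 T, z t = ρ t • (Real.cos (ϑ t), Real.sin (ϑ t)))
    (hz : ∀ᵐ t ∂volume, t ∈ Set.Icc 0 T →
      HasDerivAt z (z' t) t ∧ HasDerivAt ϑ (ϑ' t) t ∧
        J2 (z' t) = (1 - γ t (z t)) • grad2 V₁ (z t) + γ t (z t) • grad2 V₂ (z t)) :
    ∀ᵐ t ∂volume, t ∈ Set.Icc 0 T →
      0 < 2 * V₁ (Real.cos (ϑ t), Real.sin (ϑ t)) ∧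
      2 * V₁ (Real.cos (ϑ t), Real.sin (ϑ t)) ≤ -ϑ' t ∧
      -ϑ' t ≤ 2 * V₂ (Real.cos (ϑ t), Real.sin (ϑ t)) := by
  filter_upwards [hz, Ioo_ae_eq_Icc.symm.le] with t hder hinterior ht
  obtain ⟨hzd, hϑd, hode⟩ := hder ht
  obtain ⟨ht₀, htT⟩ : t ∈ Ioo 0 T := hinterior ht
  set u : ℝ × ℝ := (cos (ϑ t), sin (ϑ t))
  have hu : u ≠ 0 := fun h => by
    have hunit := sin_sq_add_cos_sq (ϑ t)
    simp only [u, Prod.ext_iff, Prod.fst_zero, Prod.snd_zero] at h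
    simp [h.1, h.2] at hunit
  have hangular := J2_dot_eq_of_polar
    (eventually_of_mem (Icc_mem_nhds ht₀ htT) hpolar) hzd hϑd
  have heuler₁ := grad2_dot_self_of_homogeneous (hV₁.differentiable one_ne_zero (z t))
    fun l hl => hhom₁ l hl (z t) (hnz t ht)
  have heuler₂ := grad2_dot_self_of_homogeneous (hV₂.differentiable one_ne_zero (z t))
    fun l hl => hhom₂ l hl (z t) (hnz t ht)
  have hscale₁ : V₁ (z t) = ρ t ^ 2 * V₁ u := hpolar t ht ▸ hhom₁ _ (hρ t ht) u hu
  have hscale₂ : V₂ (z t) = ρ t ^ 2 * V₂ u := hpolar t ht ▸ hhom₂ _ (hρ t ht) u hu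
  set g := γ t (z t)
  have hmix : ρ t ^ 2 * -ϑ' t = ρ t ^ 2 * ((1 - g) * (2 * V₁ u) + g * (2 * V₂ u)) := by
    rw [hode] at hangular
    simp only [Prod.fst_add, Prod.snd_add, Prod.smul_fst, Prod.smul_snd, smul_eq_mul] at hangular
    push_cast at heuler₁ heuler₂
    linear_combination -hangular + (1 - g) * heuler₁ + g * heuler₂
      + 2 * (1 - g) * hscale₁ + 2 * g * hscale₂
  have hvel := mul_left_cancel₀ (pow_pos (hρ t ht) 2).ne' hmix
  obtain ⟨hg₀, hg₁⟩ := hγ t (z t)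
  have hV := hle u
  refine ⟨by linarith [hpos₁ u hu], ?_, ?_⟩ <;> rw [hvel] <;> nlinarith

/-- For a never-zero solution of `Jz' = (1-γ)∇V₁(z) + γ∇V₂(z)` in polar coordinates,
the angular velocity satisfies `0 < 2V₁(cos ϑ, sin ϑ) ≤ -ϑ' ≤ 2V₂(cos ϑ, sin ϑ)` a.e. -/
theorem angular_velocity_between (T : ℝ) (hT : 0 < T)
    (V₁ V₂ : ℝ × ℝ → ℝ)
    (hV₁ : ContDiff ℝ 1 V₁) (hV₂ : ContDiff ℝ 1 V₂)
    (hhom₁ : ∀ l : ℝ, 0 < l → ∀ w : ℝ × ℝ, w ≠ 0 → V₁ (l • w) = l ^ 2 * V₁ w)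
    (hhom₂ : ∀ l : ℝ, 0 < l → ∀ w : ℝ × ℝ, w ≠ 0 → V₂ (l • w) = l ^ 2 * V₂ w)
    (hpos₁ : ∀ w : ℝ × ℝ, w ≠ 0 → 0 < V₁ w)
    (hpos₂ : ∀ w : ℝ × ℝ, w ≠ 0 → 0 < V₂ w)
    (hle : ∀ w : ℝ × ℝ, V₁ w ≤ V₂ w)
    (γ : ℝ → ℝ × ℝ → ℝ)
    (hγ : ∀ t z, γ t z ∈ Set.Icc (0:ℝ) 1)
    (z z' : ℝ → ℝ × ℝ) (ρ ϑ ϑ' : ℝ → ℝ)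
    (hnz : ∀ t ∈ Set.Icc 0 T, z t ≠ 0)
    (hρ : ∀ t ∈ Set.Icc 0 T, 0 < ρ t)
    (hpolar : ∀ t ∈ Set.Icc 0 T, z t = ρ t • (Real.cos (ϑ t), Real.sin (ϑ t)))
    (hz : ∀ᵐ t ∂volume, t ∈ Set.Icc 0 T →
      HasDerivAt z (z' t) t ∧ HasDerivAt ϑ (ϑ' t) t ∧
        J2 (z' t) = (1 - γ t (z t)) • grad2 V₁ (z t) + γ t (z t) • grad2 V₂ (z t)) :
    ∀ᵐ t ∂volume, t ∈ Set.Icc 0 T →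
      0 < 2 * V₁ (Real.cos (ϑ t), Real.sin (ϑ t)) ∧
      2 * V₁ (Real.cos (ϑ t), Real.sin (ϑ t)) ≤ -ϑ' t ∧
      -ϑ' t ≤ 2 * V₂ (Real.cos (ϑ t), Real.sin (ϑ t)) :=
  angular_velocity_between_general T V₁ V₂ hV₁ hV₂ hhom₁ hhom₂ hpos₁ hle γ hγ z z' ρ ϑ ϑ' hnz hρ
    hpolar hz
end

section
/- Let V₁ ≤ V₂ be positive, C¹, positively homogeneous functions of degree 2 on ℝ², and γ : [0,T]×ℝ² → [0,1] a Carathéodory function. Suppose z is a never-zero absolutely continuous solution of Jz' = (1−γ(t,z))∇V₁(z) + γ(t,z)∇V₂(z) whose polar angle ϑ decreases from ϑ(t₀) = θ₀ to ϑ(t₁) = θ₁ < θ₀ on [t₀,t₁] ⊂ [0,T]. Then ∫_{θ₁}^{θ₀} dθ/(2V₂(cos θ, sin θ)) ≤ t₁ − t₀ ≤ ∫_{θ₁}^{θ₀} dθ/(2V₁(cos θ, sin θ)). -/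
open Set Filter Topology Real

def IsPosHomogeneous {E : Type*} [AddCommGroup E] [Module ℝ E] (n : ℕ) (V : E → ℝ) : Prop :=
  ∀ l : ℝ, 0 < l → ∀ w : E, w ≠ 0 → V (l • w) = l ^ n * V w

theorem IsPosHomogeneous.fderiv_apply_self {E : Type*} [NormedAddCommGroup E] [NormedSpace ℝ E]
    {n : ℕ} {V : E → ℝ} {w : E} (hV : IsPosHomogeneous n V) (hd : DifferentiableAt ℝ V w)
    (hw : w ≠ 0) : fderiv ℝ V w w = n * V w := by
  have hray : HasDerivAt (fun l : ℝ => V (l • w)) (fderiv ℝ V w w) 1 := by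
    have hsmul : HasDerivAt (fun l : ℝ => l • w) w 1 := by
      simpa using (hasDerivAt_id (1 : ℝ)).smul_const w
    exact hd.hasFDerivAt.comp_hasDerivAt_of_eq 1 hsmul (one_smul ℝ w).symm
  have hpow : HasDerivAt (fun l : ℝ => l ^ n * V w) (n * V w) 1 := by
    simpa using (hasDerivAt_pow n (1 : ℝ)).mul_const (V w)
  refine hray.unique (hpow.congr_of_eventuallyEq ?_)
  filter_upwards [Ioi_mem_nhds one_pos] with l hl using hV l hl w hw

theorem cos_sin_ne_zero (x : ℝ) : ((cos x, sin x) : ℝ × ℝ) ≠ 0 := by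
  intro h
  have := sin_sq_add_cos_sq x
  simp_all [Prod.ext_iff]

theorem grad2_dot_s12 {V : ℝ × ℝ → ℝ} (z w : ℝ × ℝ) :
    (grad2 V z).1 * w.1 + (grad2 V z).2 * w.2 = fderiv ℝ V z w := by
  conv_rhs => rw [show w = w.1 • ((1 : ℝ), (0 : ℝ)) + w.2 • ((0 : ℝ), (1 : ℝ)) by ext <;> simp]
  simp only [map_add, map_smul, smul_eq_mul, grad2]
  ring

theorem cross_deriv_eq_of_polar {z : ℝ → ℝ × ℝ} {z' : ℝ × ℝ} {ρ ϑ : ℝ → ℝ} {ϑ' t : ℝ}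
    (hpolar : ∀ᶠ s in 𝓝 t, z s = ρ s • (cos (ϑ s), sin (ϑ s)))
    (hz : HasDerivAt z z' t) (hϑ : HasDerivAt ϑ ϑ' t) :
    (z t).1 * z'.2 - (z t).2 * z'.1 = ρ t ^ 2 * ϑ' := by
  have hz₁ : HasDerivAt (fun s => (z s).1) z'.1 t :=
    (ContinuousLinearMap.fst ℝ ℝ ℝ).hasFDerivAt.comp_hasDerivAt t hz
  have hz₂ : HasDerivAt (fun s => (z s).2) z'.2 t :=
    (ContinuousLinearMap.snd ℝ ℝ ℝ).hasFDerivAt.comp_hasDerivAt t hz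
  have hcross_deriv := (hz₂.mul hϑ.cos).sub (hz₁.mul hϑ.sin)
  have hzero : (fun s => (z s).2 * cos (ϑ s) - (z s).1 * sin (ϑ s)) =ᶠ[𝓝 t] fun _ => 0 := by
    filter_upwards [hpolar] with s hs
    rw [hs]
    simp only [Prod.smul_fst, Prod.smul_snd, smul_eq_mul]
    ring
  have hderiv := hcross_deriv.unique ((hasDerivAt_const t (0 : ℝ)).congr_of_eventuallyEq hzero)
  rw [hpolar.self_of_nhds] at hderiv ⊢
  simp only [Prod.smul_fst, Prod.smul_snd, smul_eq_mul] at hderiv ⊢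
  linear_combination ρ t * hderiv + ρ t ^ 2 * ϑ' * sin_sq_add_cos_sq (ϑ t)

theorem cross_eq_of_J2_eq {V₁ V₂ : ℝ × ℝ → ℝ} {p w : ℝ × ℝ} {g : ℝ}
    (hV₁ : IsPosHomogeneous 2 V₁) (hV₂ : IsPosHomogeneous 2 V₂)
    (hd₁ : DifferentiableAt ℝ V₁ p) (hd₂ : DifferentiableAt ℝ V₂ p) (hp : p ≠ 0)
    (hJ : J2 w = (1 - g) • grad2 V₁ p + g • grad2 V₂ p) :
    p.2 * w.1 - p.1 * w.2 = 2 * ((1 - g) * V₁ p + g * V₂ p) := by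
  have hEuler₁ := (grad2_dot_s12 p p).trans (hV₁.fderiv_apply_self hd₁ hp)
  have hEuler₂ := (grad2_dot_s12 p p).trans (hV₂.fderiv_apply_self hd₂ hp)
  obtain ⟨hJ₁, hJ₂⟩ := Prod.ext_iff.mp hJ
  simp only [J2, Prod.fst_add, Prod.snd_add, Prod.smul_fst, Prod.smul_snd, smul_eq_mul] at hJ₁ hJ₂
  push_cast at hEuler₁ hEuler₂
  linear_combination p.1 * hJ₁ + p.2 * hJ₂ + (1 - g) * hEuler₁ + g * hEuler₂

theorem neg_deriv_angle_eq_of_J2_eq {V₁ V₂ : ℝ × ℝ → ℝ} {z : ℝ → ℝ × ℝ} {z' : ℝ × ℝ}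
    {ρ ϑ : ℝ → ℝ} {ϑ' g t : ℝ}
    (hV₁ : IsPosHomogeneous 2 V₁) (hV₂ : IsPosHomogeneous 2 V₂)
    (hd₁ : Differentiable ℝ V₁) (hd₂ : Differentiable ℝ V₂) (hρ : 0 < ρ t)
    (hpolar : ∀ᶠ s in 𝓝 t, z s = ρ s • (cos (ϑ s), sin (ϑ s)))
    (hz : HasDerivAt z z' t) (hϑ : HasDerivAt ϑ ϑ' t)
    (hJ : J2 z' = (1 - g) • grad2 V₁ (z t) + g • grad2 V₂ (z t)) :
    -ϑ' = 2 * ((1 - g) * V₁ (cos (ϑ t), sin (ϑ t)) + g * V₂ (cos (ϑ t), sin (ϑ t))) := by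
  have hzt : z t = ρ t • (cos (ϑ t), sin (ϑ t)) := hpolar.self_of_nhds
  have hzne : z t ≠ 0 := hzt ▸ smul_ne_zero hρ.ne' (cos_sin_ne_zero _)
  have hcross := cross_deriv_eq_of_polar hpolar hz hϑ
  have hode := cross_eq_of_J2_eq hV₁ hV₂ (hd₁ _) (hd₂ _) hzne hJ
  rw [hzt, hV₁ _ hρ _ (cos_sin_ne_zero _), hV₂ _ hρ _ (cos_sin_ne_zero _)] at hode
  rw [hzt] at hcross
  refine mul_left_cancel₀ (pow_ne_zero 2 hρ.ne') ?_
  linear_combination hcross + hode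

section SeparationOfVariables

variable {c ϑ ϑ' : ℝ → ℝ} {a b : ℝ}

theorem hasDerivAt_add_integral_inv_comp (hc : Continuous c) (hpos : ∀ x, 0 < c x) (x₀ : ℝ)
    {t : ℝ} (hϑ : HasDerivAt ϑ (ϑ' t) t) :
    HasDerivAt (fun s => s + ∫ x in x₀..ϑ s, 1 / c x) ((c (ϑ t) + ϑ' t) / c (ϑ t)) t := by
  have hinv : Continuous fun x => 1 / c x := continuous_const.div hc fun x => (hpos x).ne'
  refine ((hasDerivAt_id' t).add
    ((hinv.integral_hasStrictDerivAt x₀ (ϑ t)).hasDerivAt.comp t hϑ)).congr_deriv ?_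
  field_simp [(hpos (ϑ t)).ne']

theorem integral_inv_le_sub_of_neg_deriv_le (hc : Continuous c) (hpos : ∀ x, 0 < c x)
    (hab : a ≤ b) (hϑ : ∀ t ∈ Icc a b, HasDerivAt ϑ (ϑ' t) t)
    (hbound : ∀ t ∈ Ioo a b, -ϑ' t ≤ c (ϑ t)) :
    ∫ x in ϑ b..ϑ a, 1 / c x ≤ b - a := by
  have hΦ := fun t ht => hasDerivAt_add_integral_inv_comp hc hpos (ϑ a) (hϑ t ht)
  have hmono := monotoneOn_of_hasDerivWithinAt_nonneg (convex_Icc a b)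
    (fun t ht => (hΦ t ht).continuousAt.continuousWithinAt)
    (fun t ht => (hΦ t (interior_subset ht)).hasDerivWithinAt)
    (fun t ht => div_nonneg (by linarith [hbound t (by simpa using ht)]) (hpos _).le)
  have := hmono (left_mem_Icc.2 hab) (right_mem_Icc.2 hab) hab
  simp only [intervalIntegral.integral_same, add_zero] at this
  rw [intervalIntegral.integral_symm]
  linarith

theorem sub_le_integral_inv_of_le_neg_deriv (hc : Continuous c) (hpos : ∀ x, 0 < c x)
    (hab : a ≤ b) (hϑ : ∀ t ∈ Icc a b, HasDerivAt ϑ (ϑ' t) t)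
    (hbound : ∀ t ∈ Ioo a b, c (ϑ t) ≤ -ϑ' t) :
    b - a ≤ ∫ x in ϑ b..ϑ a, 1 / c x := by
  have hΦ := fun t ht => hasDerivAt_add_integral_inv_comp hc hpos (ϑ a) (hϑ t ht)
  have hanti := antitoneOn_of_hasDerivWithinAt_nonpos (convex_Icc a b)
    (fun t ht => (hΦ t ht).continuousAt.continuousWithinAt)
    (fun t ht => (hΦ t (interior_subset ht)).hasDerivWithinAt)
    (fun t ht => div_nonpos_of_nonpos_of_nonneg (by linarith [hbound t (by simpa using ht)])
      (hpos _).le)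
  have := hanti (left_mem_Icc.2 hab) (right_mem_Icc.2 hab) hab
  simp only [intervalIntegral.integral_same, add_zero] at this
  rw [intervalIntegral.integral_symm]
  linarith

end SeparationOfVariables

theorem time_between_angles_general
    (V₁ V₂ : ℝ × ℝ → ℝ)
    (hV₁ : ContDiff ℝ 1 V₁) (hV₂ : ContDiff ℝ 1 V₂)
    (hhom₁ : ∀ l : ℝ, 0 < l → ∀ w : ℝ × ℝ, w ≠ 0 → V₁ (l • w) = l ^ 2 * V₁ w)
    (hhom₂ : ∀ l : ℝ, 0 < l → ∀ w : ℝ × ℝ, w ≠ 0 → V₂ (l • w) = l ^ 2 * V₂ w)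
    (hpos₁ : ∀ w : ℝ × ℝ, w ≠ 0 → 0 < V₁ w)
    (hpos₂ : ∀ w : ℝ × ℝ, w ≠ 0 → 0 < V₂ w)
    (hle : ∀ w : ℝ × ℝ, V₁ w ≤ V₂ w)
    (γ : ℝ → ℝ × ℝ → ℝ)
    (hγ : ∀ t z, γ t z ∈ Set.Icc (0:ℝ) 1)
    (t₀ t₁ θ₀ θ₁ : ℝ) (ht : t₀ < t₁)
    (z z' : ℝ → ℝ × ℝ) (ρ ϑ ϑ' : ℝ → ℝ)
    (hρ : ∀ t ∈ Set.Icc t₀ t₁, 0 < ρ t)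
    (hpolar : ∀ t ∈ Set.Icc t₀ t₁, z t = ρ t • (Real.cos (ϑ t), Real.sin (ϑ t)))
    (hz : ∀ t ∈ Set.Icc t₀ t₁, HasDerivAt z (z' t) t)
    (hϑ : ∀ t ∈ Set.Icc t₀ t₁, HasDerivAt ϑ (ϑ' t) t)
    (hode : ∀ t ∈ Set.Icc t₀ t₁,
      J2 (z' t) = (1 - γ t (z t)) • grad2 V₁ (z t) + γ t (z t) • grad2 V₂ (z t))
    (hθ₀ : ϑ t₀ = θ₀) (hθ₁ : ϑ t₁ = θ₁) :
    (∫ θ in θ₁..θ₀, 1 / (2 * V₂ (Real.cos θ, Real.sin θ))) ≤ t₁ - t₀ ∧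
      t₁ - t₀ ≤ ∫ θ in θ₁..θ₀, 1 / (2 * V₁ (Real.cos θ, Real.sin θ)) := by
  have hcircle : ∀ {V : ℝ × ℝ → ℝ}, ContDiff ℝ 1 V → (∀ w, w ≠ 0 → 0 < V w) →
      Continuous (fun θ => 2 * V (cos θ, sin θ)) ∧ ∀ θ, 0 < 2 * V (cos θ, sin θ) :=
    fun hV hpos => ⟨continuous_const.mul (hV.continuous.comp (continuous_cos.prodMk continuous_sin)),
      fun θ => mul_pos two_pos (hpos _ (cos_sin_ne_zero θ))⟩
  have hbounds : ∀ t ∈ Ioo t₀ t₁, 2 * V₁ (cos (ϑ t), sin (ϑ t)) ≤ -ϑ' t ∧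
      -ϑ' t ≤ 2 * V₂ (cos (ϑ t), sin (ϑ t)) := by
    intro t ht
    have ht' := Ioo_subset_Icc_self ht
    rw [neg_deriv_angle_eq_of_J2_eq hhom₁ hhom₂ (hV₁.differentiable one_ne_zero)
      (hV₂.differentiable one_ne_zero) (hρ t ht')
      (by filter_upwards [Icc_mem_nhds ht.1 ht.2] using hpolar) (hz t ht') (hϑ t ht') (hode t ht')]
    obtain ⟨hγ₀, hγ₁⟩ := hγ t (z t)
    have hV := hle (cos (ϑ t), sin (ϑ t))
    constructor <;> nlinarith
  obtain ⟨hc₁, hc₁_pos⟩ := hcircle hV₁ hpos₁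
  obtain ⟨hc₂, hc₂_pos⟩ := hcircle hV₂ hpos₂
  subst hθ₀ hθ₁
  exact ⟨integral_inv_le_sub_of_neg_deriv_le hc₂ hc₂_pos ht.le hϑ fun t ht => (hbounds t ht).2,
    sub_le_integral_inv_of_le_neg_deriv hc₁ hc₁_pos ht.le hϑ fun t ht => (hbounds t ht).1⟩

/-- Time estimates: if the polar angle of a never-zero solution of
`Jz' = (1−γ)∇V₁(z) + γ∇V₂(z)` decreases from `θ₀` to `θ₁` on `[t₀,t₁]`, then
`∫_{θ₁}^{θ₀} dθ/(2V₂) ≤ t₁ − t₀ ≤ ∫_{θ₁}^{θ₀} dθ/(2V₁)`. -/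
theorem time_between_angles (T : ℝ) (hT : 0 < T)
    (V₁ V₂ : ℝ × ℝ → ℝ)
    (hV₁ : ContDiff ℝ 1 V₁) (hV₂ : ContDiff ℝ 1 V₂)
    (hhom₁ : ∀ l : ℝ, 0 < l → ∀ w : ℝ × ℝ, w ≠ 0 → V₁ (l • w) = l ^ 2 * V₁ w)
    (hhom₂ : ∀ l : ℝ, 0 < l → ∀ w : ℝ × ℝ, w ≠ 0 → V₂ (l • w) = l ^ 2 * V₂ w)
    (hpos₁ : ∀ w : ℝ × ℝ, w ≠ 0 → 0 < V₁ w)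
    (hpos₂ : ∀ w : ℝ × ℝ, w ≠ 0 → 0 < V₂ w)
    (hle : ∀ w : ℝ × ℝ, V₁ w ≤ V₂ w)
    (γ : ℝ → ℝ × ℝ → ℝ)
    (hγ : ∀ t z, γ t z ∈ Set.Icc (0:ℝ) 1)
    (t₀ t₁ θ₀ θ₁ : ℝ) (ht : t₀ < t₁)
    (hsub : Set.Icc t₀ t₁ ⊆ Set.Icc 0 T)
    (z z' : ℝ → ℝ × ℝ) (ρ ϑ ϑ' : ℝ → ℝ)
    (hρ : ∀ t ∈ Set.Icc t₀ t₁, 0 < ρ t)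
    (hpolar : ∀ t ∈ Set.Icc t₀ t₁, z t = ρ t • (Real.cos (ϑ t), Real.sin (ϑ t)))
    (hz : ∀ t ∈ Set.Icc t₀ t₁, HasDerivAt z (z' t) t)
    (hϑ : ∀ t ∈ Set.Icc t₀ t₁, HasDerivAt ϑ (ϑ' t) t)
    (hode : ∀ t ∈ Set.Icc t₀ t₁,
      J2 (z' t) = (1 - γ t (z t)) • grad2 V₁ (z t) + γ t (z t) • grad2 V₂ (z t))
    (hdec : AntitoneOn ϑ (Set.Icc t₀ t₁))
    (hθ₀ : ϑ t₀ = θ₀) (hθ₁ : ϑ t₁ = θ₁) (hθ : θ₁ < θ₀) :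
    (∫ θ in θ₁..θ₀, 1 / (2 * V₂ (Real.cos θ, Real.sin θ))) ≤ t₁ - t₀ ∧
      t₁ - t₀ ≤ ∫ θ in θ₁..θ₀, 1 / (2 * V₁ (Real.cos θ, Real.sin θ)) :=
  time_between_angles_general V₁ V₂ hV₁ hV₂ hhom₁ hhom₂ hpos₁ hpos₂ hle γ hγ t₀ t₁ θ₀ θ₁ ht z z' ρ ϑ
    ϑ' hρ hpolar hz hϑ hode hθ₀ hθ₁
end
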